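/- (Maximal correlation bound / χ²-contraction lower bound.) Let f:(0,∞)→ℝ be a convex function with f(1)=0 that is strictly convex at 1 and twice differentiable at 1 with f''(1)>0. Let P_X be a pmf on 𝒳 with P_X(x)>0 for all x, and let W be a channel from 𝒳 to 𝒴 such that P_Y = W P_X satisfies P_Y(y)>0 for all y. Then η_{χ²}(P_X,W) ≤ η_f(P_X,W). -/

import Mathlib

/-!
Mix `P_X` towards a pmf `R` along `R_ε = (1 - ε) P_X + ε R`. Since `W` is linear, `W R_ε` is the
same mixture of `W P_X` and `W R`, and a second-order Taylor expansion of `f` at `1` gives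
`D_f(R_ε‖P_X) = f''(1)/2 · ε² χ²(R‖P_X) + o(ε²)` and likewise on the output side. Hence the
ratios `D_f(W R_ε‖W P_X) / D_f(R_ε‖P_X)`, all bounded by `η_f`, tend to the `χ²`-ratio as `ε → 0⁺`.
-/

/-- A probability mass function on a finite set. -/
def IsPmf {𝒳 : Type*} [Fintype 𝒳] (P : 𝒳 → ℝ) : Prop :=
  (∀ x, 0 ≤ P x) ∧ ∑ x, P x = 1

/-- A channel (column-stochastic matrix) from `𝒳` to `𝒴`: each column `W · x` is a pmf. -/
def IsChannel {𝒳 𝒴 : Type*} [Fintype 𝒳] [Fintype 𝒴] (W : 𝒴 → 𝒳 → ℝ) : Prop :=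
  (∀ y x, 0 ≤ W y x) ∧ ∀ x, ∑ y, W y x = 1

/-- Action of a channel on a pmf: `(W P)(y) = ∑ₓ W(y|x) P(x)`. -/
def chanApply {𝒳 𝒴 : Type*} [Fintype 𝒳] (W : 𝒴 → 𝒳 → ℝ) (P : 𝒳 → ℝ) : 𝒴 → ℝ :=
  fun y => ∑ x, W y x * P x

/-- `f` is strictly convex at `1`. -/
def StrictlyConvexAtOne (f : ℝ → ℝ) : Prop :=
  ∀ x y : ℝ, 0 < x → 0 < y → x ≠ y → ∀ l : ℝ, 0 < l → l < 1 →
    l * x + (1 - l) * y = 1 → f 1 < l * f x + (1 - l) * f y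

/-- `f(0) := lim_{t→0⁺} f(t)`, as an extended real. -/
noncomputable def fZero (f : ℝ → ℝ) : EReal :=
  Filter.limsup (fun t : ℝ => ((f t : ℝ) : EReal)) (nhdsWithin 0 (Set.Ioi (0 : ℝ)))

/-- `lim_{p→0⁺} p f(1/p)`, as an extended real. -/
noncomputable def fInftySlope (f : ℝ → ℝ) : EReal :=
  Filter.limsup (fun p : ℝ => ((p * f (1 / p) : ℝ) : EReal))
    (nhdsWithin 0 (Set.Ioi (0 : ℝ)))

/-- Extended-real-valued f-divergence with the standard conventions. -/
noncomputable def fDivE {𝒳 : Type*} [Fintype 𝒳] (f : ℝ → ℝ) (R P : 𝒳 → ℝ) : EReal :=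
  ∑ x, if P x = 0 then ((R x : ℝ) : EReal) * fInftySlope f
       else if R x = 0 then ((P x : ℝ) : EReal) * fZero f
       else ((P x * f (R x / P x) : ℝ) : EReal)

/-- Contraction coefficient for the f-divergence. -/
noncomputable def etaF {𝒳 𝒴 : Type*} [Fintype 𝒳] [Fintype 𝒴]
    (f : ℝ → ℝ) (P : 𝒳 → ℝ) (W : 𝒴 → 𝒳 → ℝ) : EReal :=
  sSup {q : EReal | ∃ R : 𝒳 → ℝ, IsPmf R ∧ 0 < fDivE f R P ∧ fDivE f R P < ⊤ ∧
    q = fDivE f (chanApply W R) (chanApply W P) / fDivE f R P}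

/-- χ²-divergence `χ²(R‖P) = ∑ₓ (R(x) − P(x))²/P(x)`. -/
noncomputable def chiSq {𝒳 : Type*} [Fintype 𝒳] (R P : 𝒳 → ℝ) : ℝ :=
  ∑ x, (R x - P x) ^ 2 / P x

/-- Contraction coefficient for χ²-divergence. -/
noncomputable def etaChi {𝒳 𝒴 : Type*} [Fintype 𝒳] [Fintype 𝒴]
    (P : 𝒳 → ℝ) (W : 𝒴 → 𝒳 → ℝ) : ℝ :=
  sSup {r : ℝ | ∃ R : 𝒳 → ℝ, IsPmf R ∧ 0 < chiSq R P ∧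
    r = chiSq (chanApply W R) (chanApply W P) / chiSq R P}

open Filter Topology Asymptotics AffineMap

theorem EReal.coe_finset_sum {ι : Type*} (s : Finset ι) (g : ι → ℝ) :
    ((∑ i ∈ s, g i : ℝ) : EReal) = ∑ i ∈ s, (g i : EReal) :=
  map_sum (⟨⟨((↑) : ℝ → EReal), EReal.coe_zero⟩, EReal.coe_add⟩ : ℝ →+ EReal) g s

theorem EReal.coe_sSup_le {S : Set ℝ} (hS : S.Nonempty) {e : EReal}
    (h : ∀ r ∈ S, (r : EReal) ≤ e) : ((sSup S : ℝ) : EReal) ≤ e := by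
  induction e using EReal.rec with
  | bot => obtain ⟨r, hr⟩ := hS; exact absurd (h r hr) (by simp)
  | coe b => exact EReal.coe_le_coe (csSup_le hS fun r hr => EReal.coe_le_coe_iff.mp (h r hr))
  | top => exact le_top

section Calculus

variable {𝕜 F : Type*} [NontriviallyNormedField 𝕜] [NormedAddCommGroup F] [NormedSpace 𝕜 F]

theorem DifferentiableAt.eventually_differentiableAt_of_hasDerivAt_deriv {f : 𝕜 → F} {a : 𝕜}
    {c : F} (hf : DifferentiableAt 𝕜 f a) (hf' : HasDerivAt (deriv f) c a) (hc : c ≠ 0) :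
    ∀ᶠ x in 𝓝 a, DifferentiableAt 𝕜 f x := by
  -- `deriv f` has a nonzero derivative at `a`, so it avoids the junk value `0` near `a`.
  have hne : ∀ᶠ x in 𝓝 a, x ≠ a → deriv f x ≠ 0 :=
    eventually_nhdsWithin_iff.mp (hf'.eventually_ne hc)
  filter_upwards [hne] with x hx
  by_cases hxa : x = a
  · exact hxa ▸ hf
  · exact differentiableAt_of_deriv_ne_zero (hx hxa)

end Calculus

theorem isLittleO_taylor_two {f : ℝ → ℝ} {a c : ℝ} (hf : ∀ᶠ x in 𝓝 a, DifferentiableAt ℝ f x)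
    (hf' : HasDerivAt (deriv f) c a) :
    (fun x => f x - f a - deriv f a * (x - a) - c / 2 * (x - a) ^ 2) =o[𝓝 a]
      fun x => (x - a) ^ 2 := by
  obtain ⟨δ, hδ, hball⟩ := Metric.eventually_nhds_iff_ball.mp hf
  have hs : 𝓝[Metric.ball a δ] a = 𝓝 a := nhdsWithin_eq_nhds.mpr (Metric.ball_mem_nhds a hδ)
  have hderiv : ∀ x ∈ Metric.ball a δ, HasDerivWithinAt
      (fun x => f x - deriv f a * (x - a) - c / 2 * (x - a) ^ 2)
      (deriv f x - deriv f a - c * (x - a)) (Metric.ball a δ) x := by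
    intro x hx
    have hlin := (hasDerivAt_id' x).sub_const a
    have h := ((hball x hx).hasDerivAt.fun_sub (hlin.const_mul (deriv f a))).fun_sub
      ((hlin.fun_pow 2).const_mul (c / 2))
    exact (h.congr_deriv (by ring)).hasDerivWithinAt
  have hsmall : (fun x => deriv f x - deriv f a - c * (x - a)) =o[𝓝[Metric.ball a δ] a]
      fun x => (x - a) ^ 1 := by
    simpa [hs, mul_comm] using hasDerivAt_iff_isLittleO.mp hf'
  have key := (convex_ball a δ).isLittleO_pow_succ_real (Metric.mem_ball_self hδ) hderiv hsmall
  rw [hs] at key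
  exact key.congr_left fun x => by ring

theorem tendsto_sum_mul_comp_lineMap_div_sq {ι : Type*} [Fintype ι] {f : ℝ → ℝ} {b c : ℝ}
    (hf1 : f 1 = 0)
    (hf : (fun x => f x - f 1 - b * (x - 1) - c / 2 * (x - 1) ^ 2) =o[𝓝 1]
      fun x => (x - 1) ^ 2)
    {P R : ι → ℝ} (hP : ∀ i, P i ≠ 0) (hsum : ∑ i, R i = ∑ i, P i) :
    Tendsto (fun ε => (∑ i, P i * f (lineMap P R ε i / P i)) / ε ^ 2) (𝓝[≠] 0)
      (𝓝 (c / 2 * chiSq R P)) := by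
  set d : ι → ℝ := fun i => (R i - P i) / P i
  set T : ℝ → ℝ := fun x => f x - f 1 - b * (x - 1) - c / 2 * (x - 1) ^ 2
  have hratio : ∀ ε i, lineMap P R ε i / P i = 1 + ε * d i := by
    intro ε i
    rw [pi_lineMap_apply, lineMap_apply_ring']
    dsimp only [d]
    field_simp [hP i]
    ring
  have hterm : ∀ i, (fun ε => P i * T (1 + ε * d i)) =o[𝓝 0] fun ε => ε ^ 2 := by
    intro i
    have hmap : Tendsto (fun ε : ℝ => 1 + ε * d i) (𝓝 0) (𝓝 1) := by
      simpa using ((continuous_mul_const (d i)).const_add 1).tendsto 0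
    refine ((hf.comp_tendsto hmap).trans_isBigO ?_).const_mul_left (P i)
    exact (isBigO_const_mul_self (d i ^ 2) _ _).congr_left fun ε => by
      simp only [Function.comp_apply]; ring
  have hexpand : ∀ ε, ∑ i, P i * T (1 + ε * d i) =
      ∑ i, P i * f (lineMap P R ε i / P i) - ε ^ 2 * (c / 2 * chiSq R P) := by
    intro ε
    have hi : ∀ i, P i * T (1 + ε * d i) = P i * f (lineMap P R ε i / P i)
        - b * ε * (R i - P i) - ε ^ 2 * (c / 2) * ((R i - P i) ^ 2 / P i) := by
      intro i
      simp only [T, d, hratio, hf1]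
      field_simp [hP i]
      ring
    simp only [hi, Finset.sum_sub_distrib, ← Finset.mul_sum, hsum, sub_self, mul_zero, sub_zero,
      chiSq]
    ring
  have hlim := (IsLittleO.sum (s := .univ) fun i _ => hterm i).tendsto_div_nhds_zero
  simp only [Finset.sum_apply, hexpand] at hlim
  have h := (hlim.mono_left (nhdsWithin_le_nhds (s := {0}ᶜ))).add_const (c / 2 * chiSq R P)
  rw [zero_add] at h
  refine h.congr' ?_
  filter_upwards [self_mem_nhdsWithin] with ε (hε : ε ≠ 0)
  field_simp
  ring

theorem lineMap_pos_of_pos_of_nonneg {k : Type*} [Field k] [LinearOrder k] [IsStrictOrderedRing k]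
    {p r ε : k} (hp : 0 < p) (hr : 0 ≤ r) (h0 : 0 ≤ ε) (h1 : ε < 1) : 0 < lineMap p r ε := by
  rw [lineMap_apply_ring]
  have := sub_pos.mpr h1
  positivity

section Channel

variable {𝒳 𝒴 : Type*} [Fintype 𝒳]

theorem IsPmf.lineMap {P R : 𝒳 → ℝ} (hP : IsPmf P) (hR : IsPmf R) {ε : ℝ} (h0 : 0 ≤ ε)
    (h1 : ε ≤ 1) : IsPmf (lineMap P R ε) := by
  have h1' := sub_nonneg.mpr h1
  refine ⟨fun x => ?_, ?_⟩
  · rw [pi_lineMap_apply, lineMap_apply_ring]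
    have := hP.1 x
    have := hR.1 x
    positivity
  · simp only [pi_lineMap_apply, lineMap_apply_ring, Finset.sum_add_distrib, ← Finset.mul_sum,
      hP.2, hR.2]
    ring

theorem isPmf_single [DecidableEq 𝒳] (x₀ : 𝒳) : IsPmf (Pi.single x₀ (1 : ℝ)) := by
  refine ⟨fun x => ?_, Fintype.sum_pi_single' x₀ 1⟩
  by_cases h : x = x₀
  · simp [h]
  · simp [h]

theorem chiSq_pos_of_ne {R P : 𝒳 → ℝ} (hP : ∀ x, 0 < P x) (h : R ≠ P) : 0 < chiSq R P := by
  obtain ⟨x, hx⟩ := Function.ne_iff.mp h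
  have hx' := sub_ne_zero.mpr hx
  have hPx := hP x
  exact Finset.sum_pos' (fun x _ => div_nonneg (sq_nonneg _) (hP x).le)
    ⟨x, Finset.mem_univ x, by positivity⟩

theorem exists_isPmf_chiSq_pos (h𝒳 : 1 < Fintype.card 𝒳) {P : 𝒳 → ℝ} (hP : ∀ x, 0 < P x) :
    ∃ R, IsPmf R ∧ 0 < chiSq R P := by
  classical
  obtain ⟨x₀, x₁, hne⟩ := Fintype.exists_pair_of_one_lt_card h𝒳
  refine ⟨Pi.single x₀ 1, isPmf_single x₀, chiSq_pos_of_ne hP fun h => ?_⟩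
  have := congr_fun h x₁
  rw [Pi.single_eq_of_ne hne.symm] at this
  exact (hP x₁).ne this

theorem chanApply_lineMap (W : 𝒴 → 𝒳 → ℝ) (P R : 𝒳 → ℝ) (ε : ℝ) :
    chanApply W (lineMap P R ε) = lineMap (chanApply W P) (chanApply W R) ε := by
  ext y
  simp only [chanApply, pi_lineMap_apply, lineMap_apply_ring', Finset.mul_sum,
    ← Finset.sum_add_distrib, ← Finset.sum_sub_distrib]
  exact Finset.sum_congr rfl fun x _ => by ring

theorem IsChannel.sum_chanApply [Fintype 𝒴] {W : 𝒴 → 𝒳 → ℝ} (hW : IsChannel W) (P : 𝒳 → ℝ) :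
    ∑ y, chanApply W P y = ∑ x, P x := by
  simp only [chanApply]
  rw [Finset.sum_comm]
  simp only [← Finset.sum_mul, hW.2, one_mul]

theorem IsChannel.chanApply_nonneg [Fintype 𝒴] {W : 𝒴 → 𝒳 → ℝ} (hW : IsChannel W) {P : 𝒳 → ℝ}
    (hP : ∀ x, 0 ≤ P x) (y : 𝒴) : 0 ≤ chanApply W P y :=
  Finset.sum_nonneg fun x _ => mul_nonneg (hW.1 y x) (hP x)

theorem fDivE_of_ne_zero (f : ℝ → ℝ) {R P : 𝒳 → ℝ} (hR : ∀ x, R x ≠ 0) (hP : ∀ x, P x ≠ 0) :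
    fDivE f R P = ((∑ x, P x * f (R x / P x) : ℝ) : EReal) := by
  rw [EReal.coe_finset_sum]
  exact Finset.sum_congr rfl fun x _ => by rw [if_neg (hP x), if_neg (hR x)]

theorem div_le_etaF [Fintype 𝒴] {f : ℝ → ℝ} {P R : 𝒳 → ℝ} {W : 𝒴 → 𝒳 → ℝ} (hR : IsPmf R)
    (hRne : ∀ x, R x ≠ 0) (hP : ∀ x, P x ≠ 0) (hWR : ∀ y, chanApply W R y ≠ 0)
    (hWP : ∀ y, chanApply W P y ≠ 0) (hpos : 0 < ∑ x, P x * f (R x / P x)) :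
    (((∑ y, chanApply W P y * f (chanApply W R y / chanApply W P y)) /
      ∑ x, P x * f (R x / P x) : ℝ) : EReal) ≤ etaF f P W := by
  have hX := fDivE_of_ne_zero f hRne hP
  refine le_sSup ⟨R, hR, ?_, ?_, ?_⟩
  · rw [hX]; exact_mod_cast hpos
  · rw [hX]; exact EReal.coe_lt_top _
  · rw [hX, fDivE_of_ne_zero f hWR hWP, EReal.coe_div]

end Channel

theorem chiSq_div_le_etaF {𝒳 𝒴 : Type*} [Fintype 𝒳] [Fintype 𝒴] {f : ℝ → ℝ} {b c : ℝ}
    (hf1 : f 1 = 0) (hc : 0 < c)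
    (hf : (fun x => f x - f 1 - b * (x - 1) - c / 2 * (x - 1) ^ 2) =o[𝓝 1]
      fun x => (x - 1) ^ 2)
    {P R : 𝒳 → ℝ} {W : 𝒴 → 𝒳 → ℝ} (hP : IsPmf P) (hPpos : ∀ x, 0 < P x) (hW : IsChannel W)
    (hWP : ∀ y, 0 < chanApply W P y) (hR : IsPmf R) (hχ : 0 < chiSq R P) :
    ((chiSq (chanApply W R) (chanApply W P) / chiSq R P : ℝ) : EReal) ≤ etaF f P W := by
  set Q := chanApply W P
  have hX := tendsto_sum_mul_comp_lineMap_div_sq hf1 hf (fun x => (hPpos x).ne')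
    (by rw [hR.2, hP.2])
  have hY := tendsto_sum_mul_comp_lineMap_div_sq hf1 hf (fun y => (hWP y).ne')
    (R := chanApply W R) (by rw [hW.sum_chanApply, hW.sum_chanApply, hR.2, hP.2])
  have hK : 0 < c / 2 * chiSq R P := by positivity
  have hratio : Tendsto (fun ε : ℝ => (∑ y, Q y * f (lineMap Q (chanApply W R) ε y / Q y)) /
      ∑ x, P x * f (lineMap P R ε x / P x)) (𝓝[≠] 0)
      (𝓝 (chiSq (chanApply W R) Q / chiSq R P)) := by
    rw [← mul_div_mul_left _ _ (by positivity : c / 2 ≠ 0)]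
    refine (hY.div hX hK.ne').congr' ?_
    filter_upwards [self_mem_nhdsWithin] with ε (hε : ε ≠ 0)
    exact div_div_div_cancel_right₀ (pow_ne_zero 2 hε) _ _
  have hev : ∀ᶠ ε : ℝ in 𝓝[>] 0, (((∑ y, Q y * f (lineMap Q (chanApply W R) ε y / Q y)) /
      ∑ x, P x * f (lineMap P R ε x / P x) : ℝ) : EReal) ≤ etaF f P W := by
    filter_upwards [(hX.mono_left (nhdsGT_le_nhdsNE 0)).eventually (lt_mem_nhds hK),
      Ioo_mem_nhdsGT one_pos] with ε hpos ⟨h0, h1⟩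
    have hRε : ∀ x, 0 < lineMap P R ε x := fun x => by
      rw [pi_lineMap_apply]; exact lineMap_pos_of_pos_of_nonneg (hPpos x) (hR.1 x) h0.le h1
    have hWRε : ∀ y, 0 < lineMap Q (chanApply W R) ε y := fun y => by
      rw [pi_lineMap_apply]
      exact lineMap_pos_of_pos_of_nonneg (hWP y) (hW.chanApply_nonneg hR.1 y) h0.le h1
    rw [← chanApply_lineMap] at hWRε ⊢
    exact div_le_etaF (hP.lineMap hR h0.le h1.le) (fun x => (hRε x).ne') (fun x => (hPpos x).ne')
      (fun y => (hWRε y).ne') (fun y => (hWP y).ne')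
      ((div_pos_iff_of_pos_right (pow_pos h0 2)).mp hpos)
  exact le_of_tendsto (EReal.tendsto_coe.mpr (hratio.mono_left (nhdsGT_le_nhdsNE 0))) hev

theorem etaChi_le_etaF_general
    {𝒳 𝒴 : Type*} [Fintype 𝒳] [Fintype 𝒴]
    (hcardX : 2 ≤ Fintype.card 𝒳)
    (f : ℝ → ℝ)
    (hf1 : f 1 = 0)
    (hd1 : DifferentiableAt ℝ f 1)
    (hd2 : DifferentiableAt ℝ (deriv f) 1)
    (hf2pos : 0 < deriv (deriv f) 1)
    (PX : 𝒳 → ℝ) (W : 𝒴 → 𝒳 → ℝ)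
    (hPX : IsPmf PX) (hPXpos : ∀ x, 0 < PX x)
    (hW : IsChannel W) (hPY : ∀ y, 0 < chanApply W PX y) :
    ((etaChi PX W : ℝ) : EReal) ≤ etaF f PX W := by
  have htaylor := isLittleO_taylor_two
    (hd1.eventually_differentiableAt_of_hasDerivAt_deriv hd2.hasDerivAt hf2pos.ne')
    hd2.hasDerivAt
  obtain ⟨R₀, hR₀, hχ₀⟩ := exists_isPmf_chiSq_pos hcardX hPXpos
  refine EReal.coe_sSup_le ?_ ?_
  · exact ⟨_, R₀, hR₀, hχ₀, rfl⟩
  · rintro r ⟨R, hR, hχ, rfl⟩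
    exact chiSq_div_le_etaF hf1 hf2pos htaylor hPX hPXpos hW hPY hR hχ

/-- **Maximal correlation bound:** `η_{χ²}(P_X,W) ≤ η_f(P_X,W)`. -/
theorem etaChi_le_etaF
    {𝒳 𝒴 : Type*} [Fintype 𝒳] [Fintype 𝒴]
    (hcardX : 2 ≤ Fintype.card 𝒳) (hcardY : 2 ≤ Fintype.card 𝒴)
    (f : ℝ → ℝ)
    (hconv : ConvexOn ℝ (Set.Ioi (0 : ℝ)) f)
    (hstrict : StrictlyConvexAtOne f)
    (hf1 : f 1 = 0)
    (hd1 : DifferentiableAt ℝ f 1)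
    (hd2 : DifferentiableAt ℝ (deriv f) 1)
    (hf2pos : 0 < deriv (deriv f) 1)
    (PX : 𝒳 → ℝ) (W : 𝒴 → 𝒳 → ℝ)
    (hPX : IsPmf PX) (hPXpos : ∀ x, 0 < PX x)
    (hW : IsChannel W) (hPY : ∀ y, 0 < chanApply W PX y) :
    ((etaChi PX W : ℝ) : EReal) ≤ etaF f PX W :=
  etaChi_le_etaF_general hcardX f hf1 hd1 hd2 hf2pos PX W hPX hPXpos hW hPY
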